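/- Let G be a graph of order n with m edges, maximum degree Δ, minimum degree δ, with signless Laplacian Q, and let M = Q² − (Δ + 2δ − 1)Q. Then every rowsum of M is at most 4m − 2(n − 1 + Δ)δ. -/

import Mathlib

/-! Since every row of `Q` sums to twice the degree, `Q 1 = 2d`, so the `k`-th rowsum of `M` is
`2 d_k² + 2 ∑_{i ~ k} d_i - 2(Δ + 2δ - 1) d_k`. The handshake lemma bounds the neighbour degree sum
by `2m - d_k - (n - 1 - d_k) δ`, and the remaining gap to the claimed bound is
`2 (d_k - δ)(Δ - d_k) ≥ 0`. -/

open Matrix Finset BigOperators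

/-- A graph is `k`-degenerate if every nonempty (induced) subgraph has a vertex
of degree at most `k` within it. -/
def SimpleGraph.Degenerate {V : Type*} (k : ℕ) (G : SimpleGraph V) : Prop :=
  ∀ s : Finset V, s.Nonempty → ∃ v ∈ s, {u ∈ (s : Set V) | G.Adj v u}.ncard ≤ k

/-- `SGraph n k`: the join of a complete graph on the first `k` vertices with an
independent set on the remaining `n - k` vertices (the graph `S_{n,k}`). -/
def SGraph (n k : ℕ) : SimpleGraph (Fin n) where
  Adj u v := u ≠ v ∧ ((u : ℕ) < k ∨ (v : ℕ) < k)
  symm := by constructor; intro u v h; exact ⟨h.1.symm, h.2.symm⟩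
  loopless := by constructor; intro u h; exact h.1 rfl

instance (n k : ℕ) : DecidableRel (SGraph n k).Adj := fun u v => by
  unfold SGraph; infer_instance

/-- The signless Laplacian `Q = D + A` as a real matrix. -/
noncomputable def signlessLaplacian {n : ℕ} (G : SimpleGraph (Fin n)) :
    Matrix (Fin n) (Fin n) ℝ :=
  letI : DecidableRel G.Adj := Classical.decRel _
  Matrix.diagonal (fun v => (G.degree v : ℝ)) + G.adjMatrix ℝ

theorem signlessLaplacian_isHermitian {n : ℕ} (G : SimpleGraph (Fin n)) :
    (signlessLaplacian G).IsHermitian := by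
  letI : DecidableRel G.Adj := Classical.decRel _
  unfold signlessLaplacian
  refine (Matrix.isHermitian_diagonal _).add ?_
  rw [Matrix.IsHermitian, Matrix.conjTranspose_eq_transpose_of_trivial]
  exact SimpleGraph.isSymm_adjMatrix G

theorem adjMatrix_isHermitian {n : ℕ} (G : SimpleGraph (Fin n)) [DecidableRel G.Adj] :
    (G.adjMatrix ℝ).IsHermitian := by
  rw [Matrix.IsHermitian, Matrix.conjTranspose_eq_transpose_of_trivial]
  exact SimpleGraph.isSymm_adjMatrix G

/-- The largest adjacency eigenvalue `μ(G)`. -/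
noncomputable def muIndex {n : ℕ} (G : SimpleGraph (Fin n)) : ℝ :=
  letI : DecidableRel G.Adj := Classical.decRel _
  ⨆ i, (adjMatrix_isHermitian G).eigenvalues i

/-- The largest signless Laplacian eigenvalue `q(G)` (the `Q`-index). -/
noncomputable def qIndex {n : ℕ} (G : SimpleGraph (Fin n)) : ℝ :=
  ⨆ i, (signlessLaplacian_isHermitian G).eigenvalues i

namespace Matrix

theorem mulVec_one_apply {m n α : Type*} [Fintype n] [NonAssocSemiring α]
    (A : Matrix m n α) (i : m) : (A *ᵥ 1) i = ∑ j, A i j := by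
  simp [mulVec, dotProduct]

end Matrix

namespace SimpleGraph

variable {V : Type*} [Fintype V] [DecidableEq V] (G : SimpleGraph V) [DecidableRel G.Adj]

/-- Each vertex outside the closed neighbourhood of `k` contributes at least `δ` to the degree
sum `2m`. -/
theorem sum_degree_neighborFinset_add_le (k : V) :
    ∑ i ∈ G.neighborFinset k, G.degree i + G.degree k +
        (Fintype.card V - (G.degree k + 1)) * G.minDegree ≤ 2 * #G.edgeFinset := by
  set S := insert k (G.neighborFinset k)
  have hkS : k ∉ G.neighborFinset k := G.notMem_neighborFinset_self k
  have hcard : #Sᶜ = Fintype.card V - (G.degree k + 1) := by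
    rw [card_compl, card_insert_of_notMem hkS, card_neighborFinset_eq_degree]
  have hfar : #Sᶜ * G.minDegree ≤ ∑ i ∈ Sᶜ, G.degree i := by
    simpa using card_nsmul_le_sum Sᶜ (fun i => G.degree i) G.minDegree
      fun i _ => G.minDegree_le_degree i
  have hsplit := sum_compl_add_sum S fun i => G.degree i
  rw [sum_insert hkS, sum_degrees_eq_twice_card_edges] at hsplit
  rw [← hcard]
  omega

theorem sum_degree_neighborFinset_add_le_real (k : V) :
    ∑ i ∈ G.neighborFinset k, (G.degree i : ℝ) + G.degree k +
      (Fintype.card V - (G.degree k + 1)) * G.minDegree ≤ 2 * G.edgeSet.ncard := by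
  have hk : G.degree k + 1 ≤ Fintype.card V := G.degree_lt_card_verts k
  have h := G.sum_degree_neighborFinset_add_le k
  rw [← Set.ncard_coe_finset, coe_edgeFinset] at h
  replace h := (Nat.cast_le (α := ℝ)).mpr h
  push_cast [Nat.cast_sub hk] at h
  exact h

end SimpleGraph

section SignlessLaplacian

variable {n : ℕ} (G : SimpleGraph (Fin n)) [DecidableRel G.Adj]

theorem signlessLaplacian_eq :
    signlessLaplacian G = diagonal (fun v => (G.degree v : ℝ)) + G.adjMatrix ℝ := by
  unfold signlessLaplacian
  congr!

theorem signlessLaplacian_mulVec_apply (f : Fin n → ℝ) (k : Fin n) :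
    (signlessLaplacian G *ᵥ f) k = G.degree k * f k + ∑ i ∈ G.neighborFinset k, f i := by
  rw [signlessLaplacian_eq, add_mulVec, Pi.add_apply, mulVec_diagonal,
    SimpleGraph.adjMatrix_mulVec_apply]

theorem signlessLaplacian_mulVec_one :
    signlessLaplacian G *ᵥ 1 = fun i => 2 * (G.degree i : ℝ) := by
  ext k
  simp [signlessLaplacian_mulVec_apply, two_mul]

theorem sum_row_signlessLaplacian_sq_sub_smul (c : ℝ) (k : Fin n) :
    ∑ j, (signlessLaplacian G * signlessLaplacian G - c • signlessLaplacian G) k j =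
      2 * (G.degree k : ℝ) ^ 2 + 2 * ∑ i ∈ G.neighborFinset k, (G.degree i : ℝ) -
        c * (2 * G.degree k) := by
  rw [← mulVec_one_apply, sub_mulVec, smul_mulVec, ← mulVec_mulVec,
    signlessLaplacian_mulVec_one, Pi.sub_apply, Pi.smul_apply, signlessLaplacian_mulVec_apply,
    ← mul_sum, smul_eq_mul]
  ring

end SignlessLaplacian

theorem stmt17 (n : ℕ) (G : SimpleGraph (Fin n)) [DecidableRel G.Adj] (k : Fin n) :
    ∑ j, (signlessLaplacian G * signlessLaplacian G -
        ((G.maxDegree : ℝ) + 2 * G.minDegree - 1) • signlessLaplacian G) k j ≤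
      4 * (G.edgeSet.ncard : ℝ) -
        2 * ((n : ℝ) - 1 + G.maxDegree) * G.minDegree := by
  have hδ : (G.minDegree : ℝ) ≤ G.degree k := by exact_mod_cast G.minDegree_le_degree k
  have hΔ : (G.degree k : ℝ) ≤ G.maxDegree := by exact_mod_cast G.degree_le_maxDegree k
  have hnbr := G.sum_degree_neighborFinset_add_le_real k
  rw [Fintype.card_fin] at hnbr
  rw [sum_row_signlessLaplacian_sq_sub_smul]
  nlinarith [mul_nonneg (sub_nonneg.mpr hδ) (sub_nonneg.mpr hΔ)]
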